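/- Under the regularity setting, for any sequence (ξ̂ₙ) of maximum likelihood estimators, the following uniform separation holds: there exists ρ₀ > 0 such that for every ρ ∈ (0,ρ₀) there exists δ > 0 such that, almost surely, for all sufficiently large n, sup{ℓ̄ₙ(ξ) : ξ ∈ Ξ, ‖ξ − ξ*‖ ≥ ρ} < ℓ̄ₙ(ξ̂ₙ) − δ, where ℓ̄ₙ(ξ) = (1/n)Σ_{i=1}^n log f(yᵢ|ξ). -/

import Mathlib

open MeasureTheory ProbabilityTheory Filter

noncomputable section

/-- The regularity setting (R3)–(R8) for a statistical model `{f(·|ξ) : ξ ∈ Ξ}`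
on countable data, with respect to the data-generating pmf `q`. -/
structure RegularModel (Y : Type) (q : Y → ℝ) (d : ℕ) where
  Xi : Set (EuclideanSpace ℝ (Fin d))
  Xi_open : IsOpen Xi
  Xi_nonempty : Xi.Nonempty
  f : Y → EuclideanSpace ℝ (Fin d) → ℝ
  f_pos : ∀ y, ∀ ξ ∈ Xi, 0 < f y ξ
  f_pmf : ∀ ξ ∈ Xi, ∑' y, f y ξ = 1
  xistar : EuclideanSpace ℝ (Fin d)
  xistar_mem : xistar ∈ Xi
  /-- (R3): the Kullback–Leibler divergence is finite (summable) at `xistar`. -/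
  R3_summable : Summable (fun y => q y * Real.log (q y / f y xistar))
  /-- (R3): `xistar` is the unique minimizer of the Kullback–Leibler divergence over `Xi`. -/
  R3_unique_min : ∀ ξ ∈ Xi, ξ ≠ xistar →
    ¬ Summable (fun y => q y * Real.log (q y / f y ξ)) ∨
      (∑' y, q y * Real.log (q y / f y xistar)) < ∑' y, q y * Real.log (q y / f y ξ)
  /-- (R4): finite second moment of the log-likelihood ratio at `xistar`. -/
  R4 : Summable (fun y => q y * (Real.log (q y / f y xistar)) ^ 2)
  /-- gradient of the unit log-likelihood -/
  s : Y → EuclideanSpace ℝ (Fin d) → EuclideanSpace ℝ (Fin d)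
  /-- Hessian of the unit log-likelihood -/
  H : Y → EuclideanSpace ℝ (Fin d) → EuclideanSpace ℝ (Fin d) →L[ℝ] EuclideanSpace ℝ (Fin d)
  /-- (R5): the unit log-likelihood has gradient `s` on `Xi`. -/
  R5_grad : ∀ y, ∀ ξ ∈ Xi, HasGradientAt (fun ξ' => Real.log (f y ξ')) (s y ξ) ξ
  /-- (R5): the gradient has derivative (Hessian) `H` on `Xi`. -/
  R5_hess : ∀ y, ∀ ξ ∈ Xi, HasFDerivAt (s y) (H y ξ) ξ
  /-- (R5): the Hessian is continuous on `Xi`. -/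
  R5_cont : ∀ y, ContinuousOn (H y) Xi
  /-- (R6) -/
  R6_log : Summable (fun y => q y * |Real.log (f y xistar)|)
  /-- (R6) -/
  R6_score : Summable (fun y => q y * ‖s y xistar‖ ^ 2)
  /-- radius of the ball `B` of (R7) -/
  r : ℝ
  r_pos : 0 < r
  ball_subset : Metric.ball xistar r ⊆ Xi
  c : Y → ℝ
  c_nonneg : ∀ y, 0 ≤ c y
  c_summable : Summable (fun y => q y * c y)
  /-- (R7): domination of the Hessian on the ball `B`. -/
  R7_bound : ∀ y, ∀ ξ ∈ Metric.ball xistar r, ‖H y ξ‖ ≤ c y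
  /-- (R8): connected upper level sets of all average log-likelihoods. -/
  R8 : ∀ (n : ℕ) (ys : Fin n → Y) (lam : ℝ),
    IsPreconnected {ξ | ξ ∈ Xi ∧ lam < (1 / (n : ℝ)) * ∑ i, Real.log (f (ys i) ξ)}

/-- The ball `B` of assumption (R7). -/
def RegularModel.B {Y : Type} {q : Y → ℝ} {d : ℕ} (M : RegularModel Y q d) :
    Set (EuclideanSpace ℝ (Fin d)) :=
  Metric.ball M.xistar M.r

/-- `yseq` are i.i.d. random variables on `(Ω, P)` with common pmf `q`. -/
def IIDData {Ω Y : Type} [MeasurableSpace Ω] [MeasurableSpace Y]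
    (P : Measure Ω) (yseq : ℕ → Ω → Y) (q : Y → ℝ) : Prop :=
  (∀ i, Measurable (yseq i)) ∧
    iIndepFun yseq P ∧
      ∀ i y, (P {ω | yseq i ω = y}).toReal = q y

/-- The average log-likelihood based on the data `ys`. -/
def avgLogLik {Y : Type} {d : ℕ} (f : Y → EuclideanSpace ℝ (Fin d) → ℝ)
    (n : ℕ) (ys : Fin n → Y) (ξ : EuclideanSpace ℝ (Fin d)) : ℝ :=
  (1 / (n : ℝ)) * ∑ i, Real.log (f (ys i) ξ)

/-- `est` is a sequence of maximum-likelihood estimators: `est n` is a measurable,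
`Ξ`-valued function of the first `n` observations which, almost surely, for all
sufficiently large `n`, globally maximizes the average log-likelihood over `Ξ`. -/
def IsMLESeq {Ω Y : Type} [MeasurableSpace Ω] [MeasurableSpace Y] {q : Y → ℝ} {d : ℕ}
    (M : RegularModel Y q d) (P : Measure Ω) (yseq : ℕ → Ω → Y)
    (est : (n : ℕ) → (Fin n → Y) → EuclideanSpace ℝ (Fin d)) : Prop :=
  (∀ n, Measurable (est n)) ∧ (∀ n ys, est n ys ∈ M.Xi) ∧
    ∀ᵐ ω ∂P, ∃ N : ℕ, ∀ n ≥ N, ∀ ξ ∈ M.Xi,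
      avgLogLik M.f n (fun i => yseq i ω) ξ ≤
        avgLogLik M.f n (fun i => yseq i ω) (est n (fun i => yseq i ω))

/-- A sequence of real random variables is bounded in probability. -/
def BoundedInProb {Ω : Type} [MeasurableSpace Ω] (P : Measure Ω) (R : ℕ → Ω → ℝ) : Prop :=
  ∀ ε > (0 : ℝ), ∃ M > (0 : ℝ), ∃ N : ℕ, ∀ n ≥ N, (P {ω | M < |R n ω|}).toReal < ε

end

/-!
Take `ρ₀ = r`, the radius of the ball of (R7). There the log-likelihoods are Lipschitz with an
integrable constant, so the strong law of large numbers on a finite net becomes almost sure uniform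
convergence of `ℓ̄ₙ` to the expected log-likelihood `L` on the closed ball of radius `ρ`. By (R3)
and compactness, `L ≤ L(ξ*) - a` on the sphere of radius `ρ` for some `a > 0`; so for large `n`,
`ℓ̄ₙ < L(ξ*) - a/2` on that sphere while `ℓ̄ₙ(ξ*) > L(ξ*) - a/8`. The superlevel set
`{ℓ̄ₙ > L(ξ*) - a/2}` is connected by (R8), contains `ξ*` and misses the sphere, hence lies inside
the ball; outside, `ℓ̄ₙ ≤ L(ξ*) - a/2 < ℓ̄ₙ(ξ*) - a/4 ≤ ℓ̄ₙ(ξ̂ₙ) - a/4`.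
-/

open Metric Topology Real
open scoped NNReal

lemma mul_log_div_eq_mul_log_sub_mul_log (a : ℝ) {b : ℝ} (hb : b ≠ 0) :
    a * log (a / b) = a * log a - a * log b := by
  rcases eq_or_ne a 0 with rfl | ha
  · simp
  · rw [log_div ha hb]
    ring

lemma IsCompact.exists_pos_forall_le_sub {X : Type*} [TopologicalSpace X] {K : Set X}
    (hK : IsCompact K) {g : X → ℝ} (hg : ContinuousOn g K) {c : ℝ} (hlt : ∀ x ∈ K, g x < c) :
    ∃ a > 0, ∀ x ∈ K, g x ≤ c - a := by
  rcases K.eq_empty_or_nonempty with rfl | hne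
  · exact ⟨1, one_pos, by simp⟩
  obtain ⟨x₀, hx₀, hmax⟩ := hK.exists_isMaxOn hne hg
  exact ⟨c - g x₀, sub_pos.2 (hlt x₀ hx₀), fun x hx => by linarith [show g x ≤ g x₀ from hmax hx]⟩

lemma IsPreconnected.subset_ball_of_disjoint_sphere {X : Type*} [PseudoMetricSpace X] {S : Set X}
    (hS : IsPreconnected S) {x : X} (hx : x ∈ S) {ρ : ℝ} (hρ : 0 ≤ ρ)
    (hdisj : Disjoint S (sphere x ρ)) : S ⊆ ball x ρ := by
  intro z hz
  by_contra hzρ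
  have hdist := hS.image (dist · x) (continuous_id.dist continuous_const).continuousOn
  obtain ⟨w, hwS, hw⟩ := hdist.ordConnected.out ⟨x, hx, dist_self x⟩ ⟨z, hz, rfl⟩ ⟨hρ, not_lt.1 hzρ⟩
  exact hdisj.ne_of_mem hwS hw rfl

lemma eventually_forall_dist_lt_of_lipschitzOnWith {ι X β : Type*} [PseudoMetricSpace X]
    [PseudoMetricSpace β] {l : Filter ι} {F : ι → X → β} {f : X → β} {K T : Set X} {C : ℝ≥0}
    {δ ε : ℝ} (hT : T.Finite) (hTK : T ⊆ K) (hcover : K ⊆ ⋃ t ∈ T, ball t δ)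
    (hε : 2 * C * δ < ε) (hf : LipschitzOnWith C f K) (hF : ∀ᶠ i in l, LipschitzOnWith C (F i) K)
    (hconv : ∀ t ∈ T, Tendsto (fun i => F i t) l (𝓝 (f t))) :
    ∀ᶠ i in l, ∀ x ∈ K, dist (f x) (F i x) < ε := by
  have hnet : ∀ᶠ i in l, ∀ t ∈ T, dist (F i t) (f t) < ε - 2 * C * δ :=
    hT.eventually_all.2 fun t ht => tendsto_nhds.1 (hconv t ht) _ (sub_pos.2 hε)
  filter_upwards [hF, hnet] with i hFi hneti x hx
  obtain ⟨t, ht, hxt⟩ := Set.mem_iUnion₂.1 (hcover hx)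
  have hxt : dist x t ≤ δ := (mem_ball.1 hxt).le
  have hft : dist (f x) (f t) ≤ C * δ :=
    (hf.dist_le_mul x hx t (hTK ht)).trans (mul_le_mul_of_nonneg_left hxt C.2)
  have hFt : dist (F i t) (F i x) ≤ C * δ :=
    (hFi.dist_le_mul t (hTK ht) x hx).trans (mul_le_mul_of_nonneg_left (dist_comm x t ▸ hxt) C.2)
  linarith [dist_triangle4 (f x) (f t) (F i t) (F i x), dist_comm (F i t) (f t), hneti t ht]

namespace IIDData

variable {Ω Y : Type} [MeasurableSpace Ω] [MeasurableSpace Y] {P : Measure Ω}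
  {yseq : ℕ → Ω → Y} {q : Y → ℝ}

lemma nonneg (hiid : IIDData P yseq q) (y : Y) : 0 ≤ q y :=
  hiid.2.2 0 y ▸ ENNReal.toReal_nonneg

variable [MeasurableSingletonClass Y] [IsFiniteMeasure P]

lemma map_singleton (hiid : IIDData P yseq q) (i : ℕ) (y : Y) :
    P.map (yseq i) {y} = ENNReal.ofReal (q y) := by
  rw [Measure.map_apply (hiid.1 i) (measurableSet_singleton y), ← hiid.2.2 i y,
    ENNReal.ofReal_toReal (measure_ne_top _ _)]
  rfl

variable [Countable Y]

lemma identDistrib (hiid : IIDData P yseq q) (i : ℕ) : IdentDistrib (yseq i) (yseq 0) P P :=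
  ⟨(hiid.1 i).aemeasurable, (hiid.1 0).aemeasurable,
    Measure.ext_of_singleton fun y => by rw [hiid.map_singleton i, hiid.map_singleton 0]⟩

lemma integrable_map (hiid : IIDData P yseq q) {g : Y → ℝ}
    (hg : Summable fun y => q y * |g y|) (i : ℕ) : Integrable g (P.map (yseq i)) := by
  refine ⟨(measurable_of_countable g).aestronglyMeasurable, ?_⟩
  have hterm : ∀ y, ‖g y‖ₑ * P.map (yseq i) {y} = ENNReal.ofReal (q y * |g y|) := fun y => by
    rw [hiid.map_singleton i, ENNReal.ofReal_mul (hiid.nonneg y), mul_comm,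
      Real.enorm_eq_ofReal_abs]
  rw [HasFiniteIntegral, lintegral_countable', tsum_congr hterm,
    ← ENNReal.ofReal_tsum_of_nonneg (fun y => mul_nonneg (hiid.nonneg y) (abs_nonneg _)) hg]
  exact ENNReal.ofReal_lt_top

lemma integral_comp_zero (hiid : IIDData P yseq q) {g : Y → ℝ}
    (hg : Summable fun y => q y * |g y|) : ∫ ω, g (yseq 0 ω) ∂P = ∑' y, q y * g y := by
  rw [← integral_map (hiid.1 0).aemeasurable (measurable_of_countable g).aestronglyMeasurable,
    integral_countable (hiid.integrable_map hg 0)]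
  refine tsum_congr fun y => ?_
  rw [measureReal_def, hiid.map_singleton 0, ENNReal.toReal_ofReal (hiid.nonneg y), smul_eq_mul,
    mul_comm]

lemma ae_tendsto_avg (hiid : IIDData P yseq q) {g : Y → ℝ}
    (hg : Summable fun y => q y * |g y|) :
    ∀ᵐ ω ∂P, Tendsto (fun n : ℕ => (1 / (n : ℝ)) * ∑ i : Fin n, g (yseq i ω)) atTop
      (𝓝 (∑' y, q y * g y)) := by
  have hmeas := measurable_of_countable g
  have hslln := strong_law_ae_real (fun i ω => g (yseq i ω))
    ((integrable_map_measure hmeas.aestronglyMeasurable (hiid.1 0).aemeasurable).1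
      (hiid.integrable_map hg 0))
    (fun i j hij => (hiid.2.1.indepFun hij).comp hmeas hmeas)
    (fun i => (hiid.identDistrib i).comp hmeas)
  rw [hiid.integral_comp_zero hg] at hslln
  filter_upwards [hslln] with ω hω
  simpa only [Fin.sum_univ_eq_sum_range (fun i => g (yseq i ω)), one_div, inv_mul_eq_div]
    using hω

end IIDData

namespace RegularModel

variable {Y : Type} {q : Y → ℝ} {d : ℕ} (M : RegularModel Y q d)

/-- Lipschitz constant of `log f(y|·)` on the closed ball of radius `ρ` about `ξ*`, obtained by
integrating the Hessian bound (R7) along segments from `ξ*`. -/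
noncomputable def lipBound (ρ : ℝ) (y : Y) : ℝ :=
  ‖M.s y M.xistar‖ + M.c y * ρ

noncomputable def expectedLogLik (ξ : EuclideanSpace ℝ (Fin d)) : ℝ :=
  ∑' y, q y * log (M.f y ξ)

lemma lipBound_nonneg {ρ : ℝ} (hρ : 0 ≤ ρ) (y : Y) : 0 ≤ M.lipBound ρ y :=
  add_nonneg (norm_nonneg _) (mul_nonneg (M.c_nonneg y) hρ)

lemma closedBall_subset_Xi {ρ : ℝ} (hρ : ρ < M.r) : closedBall M.xistar ρ ⊆ M.Xi :=
  (closedBall_subset_ball hρ).trans M.ball_subset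

lemma norm_s_le_lipBound {ρ : ℝ} (hρ : ρ < M.r) (y : Y) {ζ : EuclideanSpace ℝ (Fin d)}
    (hζ : ζ ∈ closedBall M.xistar ρ) : ‖M.s y ζ‖ ≤ M.lipBound ρ y := by
  have hsub : ‖M.s y ζ - M.s y M.xistar‖ ≤ M.c y * ‖ζ - M.xistar‖ :=
    (convex_ball M.xistar M.r).norm_image_sub_le_of_norm_hasFDerivWithin_le
      (fun x hx => (M.R5_hess y x (M.ball_subset hx)).hasFDerivWithinAt) (M.R7_bound y)
      (mem_ball_self M.r_pos) (closedBall_subset_ball hρ hζ)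
  calc ‖M.s y ζ‖ ≤ ‖M.s y M.xistar‖ + ‖M.s y ζ - M.s y M.xistar‖ := norm_le_insert' _ _
    _ ≤ ‖M.s y M.xistar‖ + M.c y * ρ := by
        gcongr
        exact hsub.trans (mul_le_mul_of_nonneg_left (mem_closedBall_iff_norm.1 hζ) (M.c_nonneg y))

lemma abs_log_f_sub_le {ρ : ℝ} (hρ : ρ < M.r) (y : Y) {ξ ξ' : EuclideanSpace ℝ (Fin d)}
    (hξ : ξ ∈ closedBall M.xistar ρ) (hξ' : ξ' ∈ closedBall M.xistar ρ) :
    |log (M.f y ξ) - log (M.f y ξ')| ≤ M.lipBound ρ y * ‖ξ - ξ'‖ := by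
  rw [← Real.norm_eq_abs]
  exact (convex_closedBall M.xistar ρ).norm_image_sub_le_of_norm_hasFDerivWithin_le
    (f' := fun x => InnerProductSpace.toDual ℝ _ (M.s y x))
    (fun x hx => (M.R5_grad y x (M.closedBall_subset_Xi hρ hx)).hasFDerivAt.hasFDerivWithinAt)
    (fun x hx => by rw [LinearIsometryEquiv.norm_map]; exact M.norm_s_le_lipBound hρ y hx) hξ' hξ

lemma lipschitzOnWith_avgLogLik {ρ : ℝ} (hρ : ρ < M.r) (n : ℕ) (ys : Fin n → Y) :
    LipschitzOnWith ((1 / (n : ℝ)) * ∑ i, M.lipBound ρ (ys i)).toNNReal (avgLogLik M.f n ys)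
      (closedBall M.xistar ρ) := by
  refine LipschitzOnWith.of_dist_le_mul fun ξ hξ ξ' hξ' => ?_
  calc dist (avgLogLik M.f n ys ξ) (avgLogLik M.f n ys ξ')
      = (1 / (n : ℝ)) * |∑ i, (log (M.f (ys i) ξ) - log (M.f (ys i) ξ'))| := by
        rw [Real.dist_eq, avgLogLik, avgLogLik, ← mul_sub, ← Finset.sum_sub_distrib, abs_mul,
          abs_of_nonneg (by positivity)]
    _ ≤ (1 / (n : ℝ)) * ∑ i, M.lipBound ρ (ys i) * ‖ξ - ξ'‖ := by
        gcongr
        exact (Finset.abs_sum_le_sum_abs _ _).trans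
          (Finset.sum_le_sum fun i _ => M.abs_log_f_sub_le hρ (ys i) hξ hξ')
    _ = ((1 / (n : ℝ)) * ∑ i, M.lipBound ρ (ys i)) * dist ξ ξ' := by
        rw [← Finset.sum_mul, dist_eq_norm, mul_assoc]
    _ ≤ _ := by gcongr; exact Real.le_coe_toNNReal _

lemma summable_mul_lipBound (hq : ∀ y, 0 ≤ q y) (hqsum : Summable q) (ρ : ℝ) :
    Summable fun y => q y * M.lipBound ρ y := by
  have hscore : Summable fun y => q y * ‖M.s y M.xistar‖ :=
    ((hqsum.add M.R6_score).div_const 2).of_nonneg_of_le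
      (fun y => mul_nonneg (hq y) (norm_nonneg _))
      fun y => by nlinarith [mul_nonneg (hq y) (sq_nonneg (‖M.s y M.xistar‖ - 1))]
  exact (hscore.add (M.c_summable.mul_right ρ)).congr fun y => by simp only [lipBound]; ring

lemma summable_mul_abs_log (hq : ∀ y, 0 ≤ q y) (hqsum : Summable q) {ρ : ℝ} (hρ : ρ < M.r)
    {ξ : EuclideanSpace ℝ (Fin d)} (hξ : ξ ∈ closedBall M.xistar ρ) :
    Summable fun y => q y * |log (M.f y ξ)| := by
  have hρ0 : 0 ≤ ρ := nonempty_closedBall.1 ⟨ξ, hξ⟩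
  refine (M.R6_log.add ((M.summable_mul_lipBound hq hqsum ρ).mul_right ρ)).of_nonneg_of_le
    (fun y => mul_nonneg (hq y) (abs_nonneg _)) fun y => ?_
  have hsub : |log (M.f y ξ) - log (M.f y M.xistar)| ≤ M.lipBound ρ y * ρ :=
    (M.abs_log_f_sub_le hρ y hξ (mem_closedBall_self hρ0)).trans
      (mul_le_mul_of_nonneg_left (mem_closedBall_iff_norm.1 hξ) (M.lipBound_nonneg hρ0 y))
  have hlog : |log (M.f y ξ)| ≤ |log (M.f y M.xistar)| + M.lipBound ρ y * ρ := by
    linarith [abs_sub_abs_le_abs_sub (log (M.f y ξ)) (log (M.f y M.xistar))]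
  calc q y * |log (M.f y ξ)| ≤ q y * (|log (M.f y M.xistar)| + M.lipBound ρ y * ρ) :=
        mul_le_mul_of_nonneg_left hlog (hq y)
    _ = _ := by ring

lemma summable_mul_log (hq : ∀ y, 0 ≤ q y) (hqsum : Summable q) {ρ : ℝ} (hρ : ρ < M.r)
    {ξ : EuclideanSpace ℝ (Fin d)} (hξ : ξ ∈ closedBall M.xistar ρ) :
    Summable fun y => q y * log (M.f y ξ) :=
  Summable.of_norm <| (M.summable_mul_abs_log hq hqsum hρ hξ).congr fun y => by
    rw [norm_mul, Real.norm_eq_abs, Real.norm_eq_abs, abs_of_nonneg (hq y)]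

lemma lipschitzOnWith_expectedLogLik (hq : ∀ y, 0 ≤ q y) (hqsum : Summable q) {ρ : ℝ}
    (hρ : ρ < M.r) :
    LipschitzOnWith (∑' y, q y * M.lipBound ρ y).toNNReal M.expectedLogLik
      (closedBall M.xistar ρ) := by
  refine LipschitzOnWith.of_dist_le_mul fun ξ hξ ξ' hξ' => ?_
  have hbound : HasSum (fun y => q y * M.lipBound ρ y * ‖ξ - ξ'‖)
      ((∑' y, q y * M.lipBound ρ y) * dist ξ ξ') := by
    rw [dist_eq_norm]
    exact (M.summable_mul_lipBound hq hqsum ρ).hasSum.mul_right _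
  calc dist (M.expectedLogLik ξ) (M.expectedLogLik ξ')
      = ‖∑' y, (q y * log (M.f y ξ) - q y * log (M.f y ξ'))‖ := by
        rw [dist_eq_norm, expectedLogLik, expectedLogLik,
          (M.summable_mul_log hq hqsum hρ hξ).tsum_sub (M.summable_mul_log hq hqsum hρ hξ')]
    _ ≤ (∑' y, q y * M.lipBound ρ y) * dist ξ ξ' := tsum_of_norm_bounded hbound fun y => by
        rw [← mul_sub, norm_mul, Real.norm_eq_abs, Real.norm_eq_abs, abs_of_nonneg (hq y),
          mul_assoc]
        exact mul_le_mul_of_nonneg_left (M.abs_log_f_sub_le hρ y hξ hξ') (hq y)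
    _ ≤ _ := by gcongr; exact Real.le_coe_toNNReal _

/-- (R3) applies because `expectedLogLik ξ = ∑ q log q - K_q(ξ)`. -/
lemma expectedLogLik_lt_expectedLogLik_xistar (hq : ∀ y, 0 ≤ q y) (hqsum : Summable q)
    {ξ : EuclideanSpace ℝ (Fin d)} (hξ : ξ ∈ M.Xi) (hne : ξ ≠ M.xistar)
    (hsum : Summable fun y => q y * log (M.f y ξ)) :
    M.expectedLogLik ξ < M.expectedLogLik M.xistar := by
  have hstar := M.summable_mul_log hq hqsum M.r_pos (mem_closedBall_self le_rfl)
  have hent : Summable fun y => q y * log (q y) :=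
    (M.R3_summable.add hstar).congr fun y => by
      rw [mul_log_div_eq_mul_log_sub_mul_log _ (M.f_pos y _ M.xistar_mem).ne']
      ring
  have hKL : ∀ ζ ∈ M.Xi, (Summable fun y => q y * log (M.f y ζ)) →
      HasSum (fun y => q y * log (q y / M.f y ζ)) (∑' y, q y * log (q y) - M.expectedLogLik ζ) :=
    fun ζ hζ hsumζ => by
      simpa only [expectedLogLik, ← mul_log_div_eq_mul_log_sub_mul_log _ (M.f_pos _ ζ hζ).ne'] using
        hent.hasSum.sub hsumζ.hasSum
  rcases M.R3_unique_min ξ hξ hne with hns | hlt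
  · exact absurd (hKL ξ hξ hsum).summable hns
  · rw [(hKL ξ hξ hsum).tsum_eq, (hKL M.xistar M.xistar_mem hstar).tsum_eq] at hlt
    linarith

lemma exists_forall_sphere_expectedLogLik_le (hq : ∀ y, 0 ≤ q y) (hqsum : Summable q) {ρ : ℝ}
    (hρ : 0 < ρ) (hρr : ρ < M.r) :
    ∃ a > 0, ∀ ζ ∈ sphere M.xistar ρ, M.expectedLogLik ζ ≤ M.expectedLogLik M.xistar - a :=
  (isCompact_sphere _ _).exists_pos_forall_le_sub
    ((M.lipschitzOnWith_expectedLogLik hq hqsum hρr).continuousOn.mono sphere_subset_closedBall)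
    fun _ hζ => M.expectedLogLik_lt_expectedLogLik_xistar hq hqsum
      (M.closedBall_subset_Xi hρr (sphere_subset_closedBall hζ)) (ne_of_mem_sphere hζ hρ.ne')
      (M.summable_mul_log hq hqsum hρr (sphere_subset_closedBall hζ))

section UniformLaw

variable [Countable Y] [MeasurableSpace Y] [MeasurableSingletonClass Y] {Ω : Type}
  [MeasurableSpace Ω] {P : Measure Ω} [IsFiniteMeasure P] {yseq : ℕ → Ω → Y}

lemma ae_eventually_forall_dist_avgLogLik_lt (hiid : IIDData P yseq q) (hqsum : Summable q)
    {ρ : ℝ} (hρ : 0 ≤ ρ) (hρr : ρ < M.r) {ε : ℝ} (hε : 0 < ε) :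
    ∀ᵐ ω ∂P, ∀ᶠ n in atTop, ∀ ζ ∈ closedBall M.xistar ρ,
      dist (M.expectedLogLik ζ) (avgLogLik M.f n (fun i => yseq i ω) ζ) < ε := by
  set G := ∑' y, q y * M.lipBound ρ y
  set C := (G + 1).toNNReal
  have hδ : 0 < ε / (2 * C + 1) := by positivity
  have hCδ : 2 * C * (ε / (2 * C + 1)) < ε := by
    rw [mul_div_assoc', div_lt_iff₀ (by positivity)]
    nlinarith
  obtain ⟨T, hTK, hT, hcover⟩ := finite_cover_balls_of_compact (isCompact_closedBall M.xistar ρ) hδ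
  have hlipBound := hiid.ae_tendsto_avg (g := M.lipBound ρ) <|
    (M.summable_mul_lipBound hiid.nonneg hqsum ρ).congr fun y => by
      rw [abs_of_nonneg (M.lipBound_nonneg hρ y)]
  have hnet : ∀ᵐ ω ∂P, ∀ t ∈ T, Tendsto (fun n => avgLogLik M.f n (fun i => yseq i ω) t) atTop
      (𝓝 (M.expectedLogLik t)) :=
    (ae_ball_iff hT.countable).2 fun t ht =>
      hiid.ae_tendsto_avg (M.summable_mul_abs_log hiid.nonneg hqsum hρr (hTK ht))
  filter_upwards [hlipBound, hnet] with ω hωlip hωnet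
  refine eventually_forall_dist_lt_of_lipschitzOnWith hT hTK hcover hCδ
    ((M.lipschitzOnWith_expectedLogLik hiid.nonneg hqsum hρr).weaken ?_) ?_ hωnet
  · exact Real.toNNReal_le_toNNReal (le_add_of_nonneg_right zero_le_one)
  · exact (hωlip.eventually_lt_const (lt_add_one G)).mono fun n hn =>
      (M.lipschitzOnWith_avgLogLik hρr n _).weaken (Real.toNNReal_le_toNNReal hn.le)

lemma ae_tendstoUniformlyOn_avgLogLik (hiid : IIDData P yseq q) (hqsum : Summable q) {ρ : ℝ}
    (hρ : 0 ≤ ρ) (hρr : ρ < M.r) :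
    ∀ᵐ ω ∂P, TendstoUniformlyOn (fun n => avgLogLik M.f n (fun i => yseq i ω))
      M.expectedLogLik atTop (closedBall M.xistar ρ) := by
  have hall := ae_all_iff.2 fun k : ℕ =>
    M.ae_eventually_forall_dist_avgLogLik_lt hiid hqsum hρ hρr (Nat.one_div_pos_of_nat (n := k))
  filter_upwards [hall] with ω hω
  refine Metric.tendstoUniformlyOn_iff.2 fun ε hε => ?_
  obtain ⟨k, hk⟩ := exists_nat_one_div_lt hε
  exact (hω k).mono fun n hn ζ hζ => (hn ζ hζ).trans hk

end UniformLaw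

lemma avgLogLik_le_of_forall_sphere_le (n : ℕ) (ys : Fin n → Y) {ρ t : ℝ} (hρ : 0 ≤ ρ)
    (hstar : t < avgLogLik M.f n ys M.xistar)
    (hsphere : ∀ ζ ∈ sphere M.xistar ρ, avgLogLik M.f n ys ζ ≤ t)
    {ξ : EuclideanSpace ℝ (Fin d)} (hξ : ξ ∈ M.Xi) (hfar : ρ ≤ ‖ξ - M.xistar‖) :
    avgLogLik M.f n ys ξ ≤ t := by
  by_contra! hlt
  have hball := (M.R8 n ys t).subset_ball_of_disjoint_sphere (x := M.xistar)
    ⟨M.xistar_mem, hstar⟩ hρ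
    (Set.disjoint_left.2 fun ζ hζ hζs => (hsphere ζ hζs).not_gt hζ.2)
  exact (mem_ball_iff_norm.1 (hball ⟨hξ, hlt⟩)).not_ge hfar

end RegularModel

theorem mle_uniform_separation_general
    {Y Ω : Type} [Countable Y] [MeasurableSpace Y] [MeasurableSingletonClass Y]
    [MeasurableSpace Ω] {d : ℕ} {q : Y → ℝ}
    (P : MeasureTheory.Measure Ω) [MeasureTheory.IsProbabilityMeasure P]
    (yseq : ℕ → Ω → Y)
    (hq_pmf : ∑' y, q y = 1)
    (hiid : IIDData P yseq q)
    (M : RegularModel Y q d)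
    (est : (n : ℕ) → (Fin n → Y) → EuclideanSpace ℝ (Fin d))
    (hest : IsMLESeq M P yseq est) :
    ∃ ρ₀ > (0 : ℝ), ∀ ρ, 0 < ρ → ρ < ρ₀ → ∃ δ > (0 : ℝ),
      ∀ᵐ ω ∂P, ∃ N : ℕ, ∀ n ≥ N, ∀ ξ ∈ M.Xi, ρ ≤ ‖ξ - M.xistar‖ →
        avgLogLik M.f n (fun i => yseq i ω) ξ <
          avgLogLik M.f n (fun i => yseq i ω) (est n (fun i => yseq i ω)) - δ := by
  have hqsum : Summable q := by
    by_contra h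
    simp [tsum_eq_zero_of_not_summable h] at hq_pmf
  refine ⟨M.r, M.r_pos, fun ρ hρ hρr => ?_⟩
  obtain ⟨a, ha, hgap⟩ := M.exists_forall_sphere_expectedLogLik_le hiid.nonneg hqsum hρ hρr
  refine ⟨a / 4, by positivity, ?_⟩
  filter_upwards [hest.2.2, M.ae_tendstoUniformlyOn_avgLogLik hiid hqsum hρ.le hρr]
    with ω ⟨N₀, hmle⟩ hunif
  obtain ⟨N₁, hN₁⟩ :=
    eventually_atTop.1 (Metric.tendstoUniformlyOn_iff.1 hunif (a / 8) (by positivity))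
  refine ⟨max N₀ N₁, fun n hn ξ hξ hfar => ?_⟩
  have hclose (ζ) (hζ : ζ ∈ closedBall M.xistar ρ) :=
    abs_lt.1 (hN₁ n (le_of_max_le_right hn) ζ hζ)
  have hstar := (hclose M.xistar (mem_closedBall_self hρ.le)).2
  have hξ_le := M.avgLogLik_le_of_forall_sphere_le n (fun i => yseq i ω) hρ.le
    (t := M.expectedLogLik M.xistar - a / 2) (by linarith)
    (fun ζ hζ => by linarith [hgap ζ hζ, (hclose ζ (sphere_subset_closedBall hζ)).1]) hξ hfar
  linarith [hmle n (le_of_max_le_left hn) M.xistar M.xistar_mem]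

/-- under the regularity setting, for any sequence of maximum likelihood
estimators, uniform separation holds: there is `ρ₀ > 0` such that for every
`ρ ∈ (0, ρ₀)` there is `δ > 0` with, almost surely, for all sufficiently large `n`,
`ℓ̄ₙ(ξ) < ℓ̄ₙ(ξ̂ₙ) − δ` for every `ξ ∈ Ξ` with `‖ξ − ξ*‖ ≥ ρ`. -/
theorem mle_uniform_separation
    {Y Ω : Type} [Countable Y] [MeasurableSpace Y] [MeasurableSingletonClass Y]
    [MeasurableSpace Ω] {d : ℕ} {q : Y → ℝ}
    (P : MeasureTheory.Measure Ω) [MeasureTheory.IsProbabilityMeasure P]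
    (yseq : ℕ → Ω → Y)
    (hq_pos : ∀ y, 0 < q y) (hq_pmf : ∑' y, q y = 1)
    (hiid : IIDData P yseq q)
    (M : RegularModel Y q d)
    (est : (n : ℕ) → (Fin n → Y) → EuclideanSpace ℝ (Fin d))
    (hest : IsMLESeq M P yseq est) :
    ∃ ρ₀ > (0 : ℝ), ∀ ρ, 0 < ρ → ρ < ρ₀ → ∃ δ > (0 : ℝ),
      ∀ᵐ ω ∂P, ∃ N : ℕ, ∀ n ≥ N, ∀ ξ ∈ M.Xi, ρ ≤ ‖ξ - M.xistar‖ →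
        avgLogLik M.f n (fun i => yseq i ω) ξ <
          avgLogLik M.f n (fun i => yseq i ω) (est n (fun i => yseq i ω)) - δ :=
  mle_uniform_separation_general P yseq hq_pmf hiid M est hest
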